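/- arXiv:0911.4280 — 2 statements merged into one kernel-verified Lean document; each statement's English description precedes it below -/
import Mathlib

section
/- Let σ > 1 and let α be a multi-index in ℕ³ with |α| ≥ 3. Then the sum over all multi-indices β ≤ α with 3 ≤ |β| ≤ |α| of (|α|!/(|β|! (|α|-|β|)!)) ((|β|-3)!)^σ ((|α|-|β|)!)^σ is bounded by C_σ ((|α|-1)!)^σ |α|^σ for some constant C_σ depending only on σ. -/
/-- Length of a multi-index in `ℕ³`. -/
def mdeg (β : ℕ × ℕ × ℕ) : ℕ := β.1 + β.2.1 + β.2.2

/-!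
Write `a = |α|` and `b = |β|`. Since `(b - 3)! (a - b)! ≤ (a - 1)!`, the excess power `σ - 1`
of the two factorials is absorbed by `((a - 1)!)^(σ - 1)`, and the binomial identity
`C(a, b) (b - 3)! (a - b)! · b (b - 1) (b - 2) = a!` leaves each term at most
`((a - 1)!)^σ · a / (b (b - 1) (b - 2))`. At most `(b + 1)²` multi-indices have length `b`, so the
sum is `O(((a - 1)!)^σ · a · H_a)`, and `H_a ≤ 1 + log a = O(a^(σ - 1))`.
-/

open Finset Real

namespace Nat

theorem choose_mul_factorial_mul_factorial_mul_descFactorial {a b k : ℕ} (hba : b ≤ a)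
    (hkb : k ≤ b) : a.choose b * ((b - k)! * (a - b)!) * b.descFactorial k = a ! := by
  rw [← choose_mul_factorial_mul_factorial hba, ← factorial_mul_descFactorial hkb]
  ring

theorem factorial_sub_mul_factorial_sub_le {a b k : ℕ} (hba : b ≤ a) (hk : 1 ≤ k)
    (hkb : k ≤ b) : (b - k)! * (a - b)! ≤ (a - 1)! := by
  have hdvd := factorial_mul_factorial_dvd_factorial_add (b - k) (a - b)
  calc (b - k)! * (a - b)! ≤ (b - k + (a - b))! := le_of_dvd (factorial_pos _) hdvd
    _ ≤ (a - 1)! := factorial_le (by omega)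

end Nat

open scoped Nat

theorem choose_mul_factorial_rpow_le {σ : ℝ} (hσ : 1 ≤ σ) {a b k : ℕ} (hk : 1 ≤ k)
    (hkb : k ≤ b) (hba : b ≤ a) :
    (a ! : ℝ) / ((b ! : ℝ) * ((a - b)! : ℝ)) * ((b - k)! : ℝ) ^ σ * ((a - b)! : ℝ) ^ σ
      ≤ ((a - 1)! : ℝ) ^ σ * (a / b.descFactorial k) := by
  have hle : (((b - k)! * (a - b)! : ℕ) : ℝ) ≤ ((a - 1)! : ℝ) := by
    exact_mod_cast Nat.factorial_sub_mul_factorial_sub_le hba hk hkb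
  have hid : (a.choose b : ℝ) * (((b - k)! * (a - b)! : ℕ) : ℝ) * b.descFactorial k
      = a * (a - 1)! := by
    have h := Nat.choose_mul_factorial_mul_factorial_mul_descFactorial hba hkb
    rw [← Nat.mul_factorial_pred (by omega : a ≠ 0)] at h
    exact_mod_cast h
  set P : ℝ := (((b - k)! * (a - b)! : ℕ) : ℝ)
  set F : ℝ := ((a - 1)! : ℝ)
  have hP : 0 < P := by positivity
  have hF : 0 < F := by positivity
  have hD : (0 : ℝ) < b.descFactorial k := by exact_mod_cast Nat.descFactorial_pos.2 hkb
  calc (a ! : ℝ) / ((b ! : ℝ) * ((a - b)! : ℝ)) * ((b - k)! : ℝ) ^ σ * ((a - b)! : ℝ) ^ σ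
      = a.choose b * P * P ^ (σ - 1) := by
        rw [Nat.cast_choose ℝ hba, rpow_sub_one hP.ne', mul_assoc,
          ← mul_rpow (by positivity) (by positivity)]
        push_cast [P]
        field_simp
    _ ≤ a.choose b * P * F ^ (σ - 1) := by gcongr
    _ = F ^ σ * (a / b.descFactorial k) := by
        rw [rpow_sub_one hF.ne', eq_div_of_mul_eq hD.ne' hid]
        field_simp

theorem mdeg_mono : Monotone mdeg := fun β α h => by
  obtain ⟨h1, h2, h3⟩ : β.1 ≤ α.1 ∧ β.2.1 ≤ α.2.1 ∧ β.2.2 ≤ α.2.2 := h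
  unfold mdeg
  omega

theorem card_filter_mdeg_eq_le (s : Finset (ℕ × ℕ × ℕ)) (k : ℕ) :
    #{β ∈ s | mdeg β = k} ≤ (k + 1) ^ 2 := by
  calc #{β ∈ s | mdeg β = k} ≤ #(range (k + 1) ×ˢ range (k + 1)) := by
        refine card_le_card_of_injOn (fun β => (β.1, β.2.1)) ?_ ?_
        · intro β hβ
          obtain ⟨-, hβ⟩ := mem_filter.1 hβ
          unfold mdeg at hβ
          simp only [coe_product, coe_range, Set.mem_prod, Set.mem_Iio]
          omega
        · intro β hβ γ hγ hβγ
          obtain ⟨-, hβ⟩ := mem_filter.1 hβ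
          obtain ⟨-, hγ⟩ := mem_filter.1 hγ
          simp only [mdeg, Prod.mk.injEq] at hβ hγ hβγ
          ext <;> omega
    _ = (k + 1) ^ 2 := by rw [card_product, card_range, sq]

theorem sum_comp_mdeg_le {s : Finset (ℕ × ℕ × ℕ)} {t : Finset ℕ} (hst : ∀ β ∈ s, mdeg β ∈ t)
    {f : ℕ → ℝ} (hf : ∀ k ∈ t, 0 ≤ f k) :
    ∑ β ∈ s, f (mdeg β) ≤ ∑ k ∈ t, ((k : ℝ) + 1) ^ 2 * f k := by
  rw [sum_comp]
  calc ∑ k ∈ s.image mdeg, #{β ∈ s | mdeg β = k} • f k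
      ≤ ∑ k ∈ s.image mdeg, ((k : ℝ) + 1) ^ 2 * f k := by
        refine sum_le_sum fun k hk => ?_
        have hk : k ∈ t := by
          obtain ⟨β, hβ, rfl⟩ := mem_image.1 hk
          exact hst β hβ
        rw [nsmul_eq_mul]
        gcongr
        · exact hf k hk
        · exact_mod_cast card_filter_mdeg_eq_le s k
    _ ≤ ∑ k ∈ t, ((k : ℝ) + 1) ^ 2 * f k := by
        refine sum_le_sum_of_subset_of_nonneg ?_ fun k hk _ => mul_nonneg (by positivity) (hf k hk)
        intro k hk
        obtain ⟨β, hβ, rfl⟩ := mem_image.1 hk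
        exact hst β hβ

theorem sq_add_one_div_descFactorial_three_le {k : ℕ} (hk : 3 ≤ k) :
    ((k : ℝ) + 1) ^ 2 / k.descFactorial 3 ≤ 8 / k := by
  obtain ⟨m, rfl⟩ := Nat.exists_eq_add_of_le' hk
  have hm : (0 : ℝ) ≤ m := m.cast_nonneg
  simp only [Nat.descFactorial_succ, Nat.descFactorial_zero, show m + 3 - 2 = m + 1 by omega,
    show m + 3 - 1 = m + 2 by omega]
  push_cast
  rw [div_le_div_iff₀ (by positivity) (by positivity)]
  nlinarith [mul_nonneg hm hm, mul_nonneg (mul_nonneg hm hm) hm]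

theorem sum_sq_add_one_div_descFactorial_three_le (n : ℕ) :
    ∑ k ∈ Icc 3 n, ((k : ℝ) + 1) ^ 2 / k.descFactorial 3 ≤ 8 * (1 + log n) :=
  calc ∑ k ∈ Icc 3 n, ((k : ℝ) + 1) ^ 2 / k.descFactorial 3
      ≤ ∑ k ∈ Icc 3 n, 8 * (k : ℝ)⁻¹ :=
        sum_le_sum fun k hk => by
          simpa only [div_eq_mul_inv] using sq_add_one_div_descFactorial_three_le (mem_Icc.1 hk).1
    _ ≤ ∑ k ∈ Icc 1 n, 8 * (k : ℝ)⁻¹ :=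
        sum_le_sum_of_subset_of_nonneg (Icc_subset_Icc_left (by norm_num))
          fun _ _ _ => by positivity
    _ = 8 * harmonic n := by
        rw [← mul_sum, harmonic_eq_sum_Icc]
        push_cast
        rfl
    _ ≤ 8 * (1 + log n) := by
        gcongr
        exact harmonic_le_one_add_log n

theorem mul_one_add_log_le_rpow {σ x : ℝ} (hσ : 1 < σ) (hx : 1 ≤ x) :
    x * (1 + log x) ≤ σ / (σ - 1) * x ^ σ := by
  have hσ' : 0 < σ - 1 := by linarith
  have hlog : 1 + log x ≤ σ / (σ - 1) * x ^ (σ - 1) :=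
    calc 1 + log x ≤ x ^ (σ - 1) + x ^ (σ - 1) / (σ - 1) :=
          add_le_add (one_le_rpow hx hσ'.le) (log_le_rpow_div (by linarith) hσ')
      _ = σ / (σ - 1) * x ^ (σ - 1) := by field_simp; ring
  calc x * (1 + log x) ≤ x * (σ / (σ - 1) * x ^ (σ - 1)) := by gcongr
    _ = σ / (σ - 1) * x ^ σ := by
        rw [rpow_sub_one (by linarith : x ≠ 0)]
        field_simp

theorem sum_binom_factorial_le (σ : ℝ) (hσ : 1 < σ) :
    ∃ C : ℝ, ∀ α : ℕ × ℕ × ℕ, 3 ≤ mdeg α →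
      ∑ β ∈ (Finset.Iic α).filter (fun β => 3 ≤ mdeg β),
          ((mdeg α).factorial : ℝ) /
              (((mdeg β).factorial : ℝ) * (((mdeg α - mdeg β).factorial : ℝ))) *
            (((mdeg β - 3).factorial : ℝ)) ^ σ * (((mdeg α - mdeg β).factorial : ℝ)) ^ σ
        ≤ C * (((mdeg α - 1).factorial : ℝ)) ^ σ * ((mdeg α : ℝ)) ^ σ := by
  refine ⟨8 * (σ / (σ - 1)), fun α hα => ?_⟩
  set n := mdeg α
  set F : ℝ := ((n - 1)! : ℝ) ^ σ
  have hdeg : ∀ β ∈ (Iic α).filter (fun β => 3 ≤ mdeg β), mdeg β ∈ Icc 3 n := by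
    intro β hβ
    obtain ⟨hβα, hβ3⟩ := mem_filter.1 hβ
    exact mem_Icc.2 ⟨hβ3, mdeg_mono (mem_Iic.1 hβα)⟩
  calc _ ≤ ∑ β ∈ (Iic α).filter (fun β => 3 ≤ mdeg β), F * (n / (mdeg β).descFactorial 3) :=
        sum_le_sum fun β hβ => choose_mul_factorial_rpow_le hσ.le (by norm_num)
          (mem_Icc.1 (hdeg β hβ)).1 (mem_Icc.1 (hdeg β hβ)).2
    _ ≤ ∑ k ∈ Icc 3 n, ((k : ℝ) + 1) ^ 2 * (F * (n / k.descFactorial 3)) :=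
        sum_comp_mdeg_le (f := fun k => F * (n / k.descFactorial 3)) hdeg fun k _ => by positivity
    _ = F * n * ∑ k ∈ Icc 3 n, ((k : ℝ) + 1) ^ 2 / k.descFactorial 3 := by
        rw [mul_sum]
        exact sum_congr rfl fun k _ => by ring
    _ ≤ F * n * (8 * (1 + log n)) :=
        mul_le_mul_of_nonneg_left (sum_sq_add_one_div_descFactorial_three_le n) (by positivity)
    _ = 8 * F * (n * (1 + log n)) := by ring
    _ ≤ 8 * F * (σ / (σ - 1) * n ^ σ) :=
        mul_le_mul_of_nonneg_left (mul_one_add_log_le_rpow hσ (by norm_cast; omega))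
          (by positivity)
    _ = 8 * (σ / (σ - 1)) * F * n ^ σ := by ring
end

section
/- Let γ ∈ [0,1] and a_{ij}(v) = (δ_{ij} - v_i v_j/|v|²)|v|^{γ+2}. There exists C̃ ≥ 1 such that for every multi-index β with |β| ≥ 2 and all v, v_* ∈ ℝ³ with |v - v_*| ≥ 1, one has |(∂^β a_{ij})(v - v_*)| ≤ C̃^{|β|} |β|! (1 + |v_*|^γ + |v|^γ). -/
noncomputable section

/-- Partial derivative in the `i`-th coordinate direction. -/
def pdiff (i : Fin 3) (f : EuclideanSpace ℝ (Fin 3) → ℝ) :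
    EuclideanSpace ℝ (Fin 3) → ℝ :=
  fun v => fderiv ℝ f v (EuclideanSpace.single i 1)

/-- The Landau collision kernel matrix entry. -/
def aL (γ : ℝ) (i j : Fin 3) (v : EuclideanSpace ℝ (Fin 3)) : ℝ :=
  ((if i = j then 1 else 0) - v i * v j / ‖v‖ ^ 2) * ‖v‖ ^ (γ + 2)


/-- Mixed partial derivative of order `lam`. -/
def pdiffIter (lam : Fin 3 → ℕ) (f : EuclideanSpace ℝ (Fin 3) → ℝ) :
    EuclideanSpace ℝ (Fin 3) → ℝ :=
  (pdiff 0)^[lam 0] ((pdiff 1)^[lam 1] ((pdiff 2)^[lam 2] f))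

/-!
Away from the origin `∂_k (c v^d ‖v‖^s) = c d_k v^(d - e_k) ‖v‖^s + c s v^(d + e_k) ‖v‖^(s - 2)`,
so every derivative of order `n` of `a_ij(v) = δ_ij ‖v‖^(γ+2) - v_i v_j ‖v‖^γ` is a finite sum of
terms `c v^d ‖v‖^s`, each homogeneous of degree `γ + 2 - n` and with `|d| ≤ n + 2`. For such a
term `d_k ≤ n + 2` and `|s| ≤ 2n + 3`, so one more derivative multiplies the sum of the `|c|` by
at most `3n + 5 ≤ 5(n + 1)`, which after `n` derivatives gives `2 · 5^n · n!`. Each term is at most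
`|c| ‖v‖^(γ+2-n) ≤ |c| ‖v‖^γ` once `‖v‖ ≥ 1` and `n ≥ 2`, and `‖v - v_*‖^γ ≤ ‖v‖^γ + ‖v_*‖^γ`
since `γ ≤ 1`.
-/

open Finset

theorem hasFDerivAt_norm_rpow_of_ne_zero {E : Type*} [NormedAddCommGroup E]
    [InnerProductSpace ℝ E] {x : E} (hx : x ≠ 0) (p : ℝ) :
    HasFDerivAt (fun x : E ↦ ‖x‖ ^ p) ((p * ‖x‖ ^ (p - 2)) • innerSL ℝ x) x := by
  convert ((hasStrictFDerivAt_norm_sq x).rpow_const (p := p / 2) (by simp [hx])).hasFDerivAt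
    using 1
  · ext y
    rw [← Real.rpow_natCast_mul (norm_nonneg _)]
    ring_nf
  · simp_rw [← Real.rpow_natCast_mul (norm_nonneg _), ← Nat.cast_smul_eq_nsmul ℝ, smul_smul]
    ring_nf

theorem single_one_le_of_ne_zero {ι : Type*} [DecidableEq ι] {d : ι → ℕ} {k : ι}
    (hk : d k ≠ 0) : (Pi.single k 1 : ι → ℕ) ≤ d := by
  intro l
  rcases eq_or_ne l k with rfl | hl
  · simpa using Nat.one_le_iff_ne_zero.mpr hk
  · simp [hl]

theorem abs_prod_pow_le_norm_pow {ι : Type*} [Fintype ι] (d : ι → ℕ) (v : EuclideanSpace ℝ ι) :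
    |∏ l, v l ^ d l| ≤ ‖v‖ ^ ∑ l, d l := by
  rw [abs_prod, ← prod_pow_eq_pow_sum]
  gcongr with l
  rw [abs_pow]
  exact pow_le_pow_left₀ (abs_nonneg _) (by simpa using PiLp.norm_apply_le v l) _

section Monomial

variable {ι : Type*} [Fintype ι] [DecidableEq ι]

theorem sum_add_single_one (d : ι → ℕ) (k : ι) :
    ∑ l, (d + Pi.single k 1 : ι → ℕ) l = ∑ l, d l + 1 := by
  simp [sum_add_distrib]

theorem sum_sub_single_one {d : ι → ℕ} {k : ι} (hk : d k ≠ 0) :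
    ∑ l, (d - Pi.single k 1 : ι → ℕ) l = ∑ l, d l - 1 := by
  simp [sum_tsub_distrib _ fun l _ => single_one_le_of_ne_zero hk l]

theorem prod_pow_add_single_one {M : Type*} [CommMonoid M] (x : ι → M) (d : ι → ℕ) (k : ι) :
    ∏ l, x l ^ (d + Pi.single k 1 : ι → ℕ) l = x k * ∏ l, x l ^ d l := by
  simp only [Pi.add_apply, pow_add, prod_mul_distrib, Pi.single_apply, pow_ite, pow_one, pow_zero,
    prod_ite_eq', mem_univ, if_true]
  exact mul_comm _ _

theorem prod_pow_single_add_single {M : Type*} [CommMonoid M] (x : ι → M) (i j : ι) :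
    ∏ l, x l ^ (Pi.single i 1 + Pi.single j 1 : ι → ℕ) l = x i * x j := by
  rw [prod_pow_add_single_one, ← zero_add (Pi.single i 1 : ι → ℕ), prod_pow_add_single_one]
  simp [mul_comm]

theorem hasFDerivAt_prod_pow (d : ι → ℕ) (v : EuclideanSpace ℝ ι) :
    HasFDerivAt (fun w : EuclideanSpace ℝ ι => ∏ l, w l ^ d l)
      (∑ l, (∏ j ∈ univ.erase l, v j ^ d j) • ((d l * v l ^ (d l - 1)) •
        (EuclideanSpace.proj l : EuclideanSpace ℝ ι →L[ℝ] ℝ))) v :=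
  HasFDerivAt.finsetProd fun l _ =>
    (hasDerivAt_pow (d l) (v l)).comp_hasFDerivAt v (EuclideanSpace.proj (𝕜 := ℝ) l).hasFDerivAt

theorem fderiv_prod_pow_single (d : ι → ℕ) (v : EuclideanSpace ℝ ι) (k : ι) :
    fderiv ℝ (fun w : EuclideanSpace ℝ ι => ∏ l, w l ^ d l) v (EuclideanSpace.single k 1)
      = d k * ∏ l, v l ^ (d - Pi.single k 1 : ι → ℕ) l := by
  rw [(hasFDerivAt_prod_pow d v).fderiv]
  simp only [_root_.sum_apply, smul_apply, PiLp.proj_apply, PiLp.single_apply,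
    smul_eq_mul, mul_ite, mul_one, mul_zero, sum_ite_eq', mem_univ, ↓reduceIte, Pi.sub_apply]
  have h_erase : ∏ j ∈ univ.erase k, v j ^ (d j - (Pi.single k 1 : ι → ℕ) j) =
      ∏ j ∈ univ.erase k, v j ^ d j :=
    prod_congr rfl fun j hj => by rw [Pi.single_eq_of_ne (ne_of_mem_erase hj), Nat.sub_zero]
  rw [← mul_prod_erase univ _ (mem_univ k), h_erase, Pi.single_eq_same]
  ring

end Monomial

/-- `⟨c, d, s⟩` stands for the function `v ↦ c * ∏ l, v l ^ d l * ‖v‖ ^ s`. -/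
structure NormMonomial (ι : Type*) where
  coeff : ℝ
  exp : ι → ℕ
  normExp : ℝ

namespace NormMonomial

variable {ι : Type*}

def mass (L : List (NormMonomial ι)) : ℝ :=
  (L.map fun t => |t.coeff|).sum

theorem mass_cons (t : NormMonomial ι) (L : List (NormMonomial ι)) :
    mass (t :: L) = |t.coeff| + mass L :=
  List.sum_cons

theorem mass_append (L L' : List (NormMonomial ι)) : mass (L ++ L') = mass L + mass L' := by
  simp [mass]

theorem mass_nonneg (L : List (NormMonomial ι)) : 0 ≤ mass L :=
  List.sum_nonneg fun _ hx => by
    obtain ⟨t, -, rfl⟩ := List.mem_map.mp hx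
    exact abs_nonneg _

variable [Fintype ι]

def eval (t : NormMonomial ι) (v : EuclideanSpace ℝ ι) : ℝ :=
  t.coeff * (∏ l, v l ^ t.exp l) * ‖v‖ ^ t.normExp

def evalSum (L : List (NormMonomial ι)) : EuclideanSpace ℝ ι → ℝ :=
  (L.map eval).sum

theorem evalSum_cons (t : NormMonomial ι) (L : List (NormMonomial ι)) :
    evalSum (t :: L) = t.eval + evalSum L :=
  List.sum_cons

theorem evalSum_append (L L' : List (NormMonomial ι)) :
    evalSum (L ++ L') = evalSum L + evalSum L' := by
  simp [evalSum]

def degree (t : NormMonomial ι) : ℕ := ∑ l, t.exp l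

/-- The terms of an `n`-th derivative of `aL γ i j` are admissible of order `n`. -/
def Admissible (γ : ℝ) (n : ℕ) (t : NormMonomial ι) : Prop :=
  t.coeff = 0 ∨ (t.degree ≤ n + 2 ∧ (t.degree : ℝ) + t.normExp = γ + 2 - n)

theorem exp_le_degree (t : NormMonomial ι) (k : ι) : t.exp k ≤ t.degree :=
  single_le_sum (fun _ _ => Nat.zero_le _) (mem_univ k)

theorem abs_eval_le (t : NormMonomial ι) {v : EuclideanSpace ℝ ι} (hv : v ≠ 0) :
    |t.eval v| ≤ |t.coeff| * ‖v‖ ^ ((t.degree : ℝ) + t.normExp) :=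
  calc |t.eval v| = |t.coeff| * |∏ l, v l ^ t.exp l| * ‖v‖ ^ t.normExp := by
        rw [eval, abs_mul, abs_mul, abs_of_nonneg (Real.rpow_nonneg (norm_nonneg v) _)]
    _ ≤ |t.coeff| * ‖v‖ ^ t.degree * ‖v‖ ^ t.normExp := by
        gcongr
        exact abs_prod_pow_le_norm_pow _ _
    _ = |t.coeff| * ‖v‖ ^ ((t.degree : ℝ) + t.normExp) := by
        rw [mul_assoc, ← Real.rpow_natCast, ← Real.rpow_add (norm_pos_iff.mpr hv)]

theorem Admissible.abs_eval_le {γ : ℝ} {n : ℕ} {t : NormMonomial ι} (ht : t.Admissible γ n)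
    {v : EuclideanSpace ℝ ι} (hv : v ≠ 0) : |t.eval v| ≤ |t.coeff| * ‖v‖ ^ (γ + 2 - n) := by
  rcases ht with hc | ⟨-, hhom⟩
  · simp [eval, hc]
  · simpa only [hhom] using t.abs_eval_le hv

theorem abs_evalSum_le {γ : ℝ} {n : ℕ} {L : List (NormMonomial ι)}
    (hL : ∀ t ∈ L, t.Admissible γ n) {v : EuclideanSpace ℝ ι} (hv : v ≠ 0) :
    |evalSum L v| ≤ mass L * ‖v‖ ^ (γ + 2 - n) := by
  induction L with
  | nil => simp [evalSum, mass]
  | cons t L ih =>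
    rw [evalSum_cons, Pi.add_apply, mass_cons, add_mul]
    exact (abs_add_le _ _).trans (add_le_add ((hL t List.mem_cons_self).abs_eval_le hv)
      (ih fun t' ht' => hL t' (List.mem_cons_of_mem _ ht')))

section Deriv

variable [DecidableEq ι]

/-- `t.exp - Pi.single k 1` truncates when `t.exp k = 0`, but then the coefficient is `0`. -/
def pderiv (k : ι) (t : NormMonomial ι) : List (NormMonomial ι) :=
  [⟨t.coeff * t.exp k, t.exp - Pi.single k 1, t.normExp⟩,
   ⟨t.coeff * t.normExp, t.exp + Pi.single k 1, t.normExp - 2⟩]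

def pderivSum (k : ι) (L : List (NormMonomial ι)) : List (NormMonomial ι) :=
  L.flatMap (pderiv k)

theorem differentiableAt_eval (t : NormMonomial ι) {v : EuclideanSpace ℝ ι} (hv : v ≠ 0) :
    DifferentiableAt ℝ t.eval v :=
  ((hasFDerivAt_prod_pow t.exp v).differentiableAt.const_mul t.coeff).mul
    (hasFDerivAt_norm_rpow_of_ne_zero hv t.normExp).differentiableAt

theorem fderiv_eval_single (t : NormMonomial ι) {v : EuclideanSpace ℝ ι} (hv : v ≠ 0) (k : ι) :
    fderiv ℝ t.eval v (EuclideanSpace.single k 1) = evalSum (t.pderiv k) v := by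
  have h : HasFDerivAt t.eval _ v :=
    (((hasFDerivAt_prod_pow t.exp v).differentiableAt.hasFDerivAt).const_mul t.coeff).mul
      (hasFDerivAt_norm_rpow_of_ne_zero hv t.normExp)
  rw [h.fderiv]
  simp only [evalSum, pderiv, List.map_cons, List.map_nil, List.sum_cons, List.sum_nil,
    Pi.add_apply, add_zero]
  simp only [eval, prod_pow_add_single_one, add_apply, smul_apply, coe_innerSL_apply,
    EuclideanSpace.inner_single_right, conj_trivial, one_mul, smul_eq_mul, fderiv_prod_pow_single]
  ring

theorem differentiableAt_evalSum (L : List (NormMonomial ι)) {v : EuclideanSpace ℝ ι}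
    (hv : v ≠ 0) : DifferentiableAt ℝ (evalSum L) v := by
  induction L with
  | nil => exact differentiableAt_const 0
  | cons t L ih => rw [evalSum_cons]; exact (t.differentiableAt_eval hv).add ih

theorem fderiv_evalSum_single (L : List (NormMonomial ι)) {v : EuclideanSpace ℝ ι} (hv : v ≠ 0)
    (k : ι) : fderiv ℝ (evalSum L) v (EuclideanSpace.single k 1) = evalSum (pderivSum k L) v := by
  induction L with
  | nil => simp [evalSum, pderivSum]
  | cons t L ih =>
    rw [evalSum_cons, fderiv_add (t.differentiableAt_eval hv) (differentiableAt_evalSum L hv),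
      pderivSum, List.flatMap_cons, evalSum_append, add_apply, Pi.add_apply,
      fderiv_eval_single t hv, ih, pderivSum]

theorem Admissible.pderiv {γ : ℝ} {n : ℕ} {t : NormMonomial ι} (ht : t.Admissible γ n) (k : ι) :
    ∀ t' ∈ t.pderiv k, t'.Admissible γ (n + 1) := by
  simp only [NormMonomial.pderiv, List.mem_cons, List.not_mem_nil, or_false, forall_eq_or_imp,
    forall_eq]
  rcases ht with hc | ⟨hdeg, hhom⟩
  · simp [Admissible, hc]
  constructor
  · rcases eq_or_ne (t.exp k) 0 with hk | hk
    · left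
      simp [hk]
    right
    have hk' : 1 ≤ t.degree := (Nat.one_le_iff_ne_zero.mpr hk).trans (t.exp_le_degree k)
    simp only [degree, sum_sub_single_one hk] at hdeg hhom hk' ⊢
    refine ⟨by omega, ?_⟩
    rw [Nat.cast_sub hk', Nat.cast_one, Nat.cast_add_one]
    linarith
  · right
    simp only [degree, sum_add_single_one] at hdeg hhom ⊢
    refine ⟨by omega, ?_⟩
    rw [Nat.cast_add_one, Nat.cast_add_one]
    linarith

theorem Admissible.mass_pderiv_le {γ : ℝ} (hγ : γ ∈ Set.Icc (0 : ℝ) 1) {n : ℕ}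
    {t : NormMonomial ι} (ht : t.Admissible γ n) (k : ι) :
    mass (t.pderiv k) ≤ (3 * n + 5) * |t.coeff| := by
  simp only [NormMonomial.pderiv, mass, List.map_cons, List.map_nil, List.sum_cons, List.sum_nil,
    add_zero, abs_mul, Nat.abs_cast]
  rcases ht with hc | ⟨hdeg, hhom⟩
  · simp [hc]
  have hdeg' : (t.degree : ℝ) ≤ n + 2 := by exact_mod_cast hdeg
  have hk : (t.exp k : ℝ) ≤ n + 2 := le_trans (by exact_mod_cast t.exp_le_degree k) hdeg'
  have hs : |t.normExp| ≤ 2 * n + 3 := by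
    rw [abs_le]
    constructor <;> nlinarith [hγ.1, hγ.2, (t.degree.cast_nonneg : (0 : ℝ) ≤ t.degree)]
  calc |t.coeff| * t.exp k + |t.coeff| * |t.normExp|
      ≤ |t.coeff| * (n + 2) + |t.coeff| * (2 * n + 3) := by gcongr
    _ = (3 * n + 5) * |t.coeff| := by ring

theorem admissible_pderivSum {γ : ℝ} {n : ℕ} {L : List (NormMonomial ι)}
    (hL : ∀ t ∈ L, t.Admissible γ n) (k : ι) :
    ∀ t' ∈ pderivSum k L, t'.Admissible γ (n + 1) := by
  intro t' ht'
  obtain ⟨t, ht, ht'⟩ := List.mem_flatMap.mp ht'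
  exact (hL t ht).pderiv k t' ht'

theorem mass_pderivSum_le {γ : ℝ} (hγ : γ ∈ Set.Icc (0 : ℝ) 1) {n : ℕ}
    {L : List (NormMonomial ι)} (hL : ∀ t ∈ L, t.Admissible γ n) (k : ι) :
    mass (pderivSum k L) ≤ (3 * n + 5) * mass L := by
  induction L with
  | nil => simp [pderivSum, mass]
  | cons t L ih =>
    rw [pderivSum, List.flatMap_cons, mass_append, mass_cons, mul_add]
    exact add_le_add ((hL t List.mem_cons_self).mass_pderiv_le hγ k)
      (ih fun t' ht' => hL t' (List.mem_cons_of_mem _ ht'))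

end Deriv

end NormMonomial

theorem Set.EqOn.pdiff {f g : EuclideanSpace ℝ (Fin 3) → ℝ} {U : Set (EuclideanSpace ℝ (Fin 3))}
    (h : Set.EqOn f g U) (hU : IsOpen U) (k : Fin 3) : Set.EqOn (pdiff k f) (pdiff k g) U :=
  fun v hv => by simp only [_root_.pdiff, (Filter.eventuallyEq_of_mem (hU.mem_nhds hv) h).fderiv_eq]

open NormMonomial

def HasExpansion (γ : ℝ) (n : ℕ) (B : ℝ) (f : EuclideanSpace ℝ (Fin 3) → ℝ) : Prop :=
  ∃ L : List (NormMonomial (Fin 3)), (∀ t ∈ L, t.Admissible γ n) ∧ mass L ≤ B ∧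
    Set.EqOn f (evalSum L) {v | v ≠ 0}

namespace HasExpansion

variable {γ B : ℝ} {n : ℕ} {f : EuclideanSpace ℝ (Fin 3) → ℝ}

theorem nonneg (h : HasExpansion γ n B f) : 0 ≤ B :=
  let ⟨L, _, hmass, _⟩ := h
  (mass_nonneg L).trans hmass

theorem mono {B' : ℝ} (h : HasExpansion γ n B f) (hB : B ≤ B') : HasExpansion γ n B' f :=
  let ⟨L, hL, hmass, hf⟩ := h
  ⟨L, hL, hmass.trans hB, hf⟩

theorem abs_le (h : HasExpansion γ n B f) {v : EuclideanSpace ℝ (Fin 3)} (hv : v ≠ 0) :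
    |f v| ≤ B * ‖v‖ ^ (γ + 2 - n) := by
  obtain ⟨L, hL, hmass, hf⟩ := h
  rw [hf hv]
  exact (abs_evalSum_le hL hv).trans
    (mul_le_mul_of_nonneg_right hmass (Real.rpow_nonneg (norm_nonneg v) _))

theorem pdiff (hγ : γ ∈ Set.Icc (0 : ℝ) 1) (h : HasExpansion γ n B f) (k : Fin 3) :
    HasExpansion γ (n + 1) ((3 * n + 5) * B) (_root_.pdiff k f) := by
  obtain ⟨L, hL, hmass, hf⟩ := h
  refine ⟨pderivSum k L, admissible_pderivSum hL k,
    (mass_pderivSum_le hγ hL k).trans (by gcongr), fun v hv => ?_⟩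
  rw [hf.pdiff isOpen_compl_singleton k hv, _root_.pdiff, fderiv_evalSum_single L hv]

theorem iterate_pdiff (hγ : γ ∈ Set.Icc (0 : ℝ) 1) {M : ℝ}
    (h : HasExpansion γ n (M * 5 ^ n * n.factorial) f) (k : Fin 3) (q : ℕ) :
    HasExpansion γ (n + q) (M * 5 ^ (n + q) * (n + q).factorial) ((_root_.pdiff k)^[q] f) := by
  induction q with
  | zero => exact h
  | succ q ih =>
    rw [Function.iterate_succ_apply', ← add_assoc]
    refine (ih.pdiff hγ k).mono ?_
    rw [Nat.factorial_succ, pow_succ]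
    push_cast
    nlinarith [ih.nonneg]

theorem pdiffIter (hγ : γ ∈ Set.Icc (0 : ℝ) 1) {M : ℝ} (h : HasExpansion γ 0 M f)
    (β : Fin 3 → ℕ) :
    HasExpansion γ (∑ k, β k) (M * 5 ^ (∑ k, β k) * (∑ k, β k).factorial)
      (_root_.pdiffIter β f) := by
  have h₀ : HasExpansion γ 0 (M * 5 ^ 0 * Nat.factorial 0) f := by simpa using h
  have hβ : ∑ k, β k = 0 + β 2 + β 1 + β 0 := by rw [Fin.sum_univ_three]; ring
  rw [hβ]
  exact (((h₀.iterate_pdiff hγ 2 (β 2)).iterate_pdiff hγ 1 (β 1)).iterate_pdiff hγ 0 (β 0))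

end HasExpansion

theorem hasExpansion_aL (γ : ℝ) (i j : Fin 3) : HasExpansion γ 0 2 (aL γ i j) := by
  refine ⟨[⟨if i = j then 1 else 0, 0, γ + 2⟩, ⟨-1, Pi.single i 1 + Pi.single j 1, γ⟩],
    ?_, ?_, fun v hv => ?_⟩
  · simp only [List.mem_cons, List.not_mem_nil, or_false, forall_eq_or_imp, forall_eq]
    refine ⟨Or.inr ?_, Or.inr ?_⟩
    · simp [degree]
    · simp [degree, sum_add_distrib]
      ring
  · simp only [mass, List.map_cons, List.map_nil, List.sum_cons, List.sum_nil]
    split_ifs <;> norm_num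
  · have hv' : ‖v‖ ≠ 0 := norm_ne_zero_iff.mpr hv
    simp only [aL, evalSum, List.map_cons, List.map_nil, List.sum_cons, List.sum_nil,
      Pi.add_apply, add_zero]
    simp only [eval, prod_pow_single_add_single, Pi.zero_apply, pow_zero, prod_const_one]
    rw [show γ + 2 = γ + (2 : ℕ) by norm_num, Real.rpow_add_natCast hv']
    field_simp
    ring

theorem norm_sub_rpow_le {E : Type*} [SeminormedAddCommGroup E] {γ : ℝ}
    (hγ : γ ∈ Set.Icc (0 : ℝ) 1) (v w : E) : ‖v - w‖ ^ γ ≤ ‖v‖ ^ γ + ‖w‖ ^ γ :=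
  (Real.rpow_le_rpow (norm_nonneg _) (norm_sub_le v w) hγ.1).trans
    (Real.rpow_add_le_add_rpow (norm_nonneg v) (norm_nonneg w) hγ.1 hγ.2)

theorem deriv_aL_bound_far (γ : ℝ) (hγ : γ ∈ Set.Icc (0 : ℝ) 1) (i j : Fin 3) :
    ∃ C : ℝ, 1 ≤ C ∧ ∀ β : Fin 3 → ℕ, 2 ≤ ∑ k, β k →
      ∀ v vs : EuclideanSpace ℝ (Fin 3), 1 ≤ ‖v - vs‖ →
      |pdiffIter β (aL γ i j) (v - vs)|
        ≤ C ^ (∑ k, β k) * ((∑ k, β k).factorial : ℝ) * (1 + ‖vs‖ ^ γ + ‖v‖ ^ γ) := by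
  refine ⟨10, by norm_num, fun β hβ v vs hfar => ?_⟩
  set n := ∑ k, β k
  have hw : v - vs ≠ 0 := fun h => by norm_num [h] at hfar
  have hn : (2 : ℝ) ≤ n := by exact_mod_cast hβ
  have hC : 2 * (5 : ℝ) ^ n ≤ 10 ^ n :=
    calc 2 * (5 : ℝ) ^ n ≤ 2 ^ n * 5 ^ n := by gcongr; exact le_self_pow₀ (by norm_num) (by omega)
      _ = 10 ^ n := by rw [← mul_pow]; norm_num
  calc |pdiffIter β (aL γ i j) (v - vs)|
      ≤ 2 * 5 ^ n * n.factorial * ‖v - vs‖ ^ (γ + 2 - n) :=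
        ((hasExpansion_aL γ i j).pdiffIter hγ β).abs_le hw
    _ ≤ 2 * 5 ^ n * n.factorial * ‖v - vs‖ ^ γ := by
        gcongr
        linarith
    _ ≤ 10 ^ n * n.factorial * (1 + ‖vs‖ ^ γ + ‖v‖ ^ γ) := by
        gcongr
        linarith [norm_sub_rpow_le hγ v vs]

end
end
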